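/- arXiv:1705.07417 — 3 statements merged into one kernel-verified Lean document; each statement's English description precedes it below -/
import Mathlib

section
/- Let m ≥ 2, α a nonzero linear form in S = K[x_1,…,x_ℓ], and θ ∈ D^(m)(S). Then θ preserves the ideal αS if and only if the commutator [θ, x_i] preserves αS for every i with 1 ≤ i ≤ ℓ. -/
open MvPolynomial

/-- The operator `∂^a = ∂_1^{a_1} ⋯ ∂_ℓ^{a_ℓ}` on `S = K[x_1,…,x_ℓ]`. -/
noncomputable def pdOp (K : Type) [CommRing K] {ℓ : ℕ} (a : Fin ℓ →₀ ℕ) :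
    Module.End K (MvPolynomial (Fin ℓ) K) :=
  (List.ofFn fun i : Fin ℓ =>
    ((pderiv i : Derivation K (MvPolynomial (Fin ℓ) K) (MvPolynomial (Fin ℓ) K)).toLinearMap) ^ (a i)).prod

/-- Multiplication by a polynomial, as a `K`-endomorphism of `S`. -/
noncomputable def mulOp (K : Type) [CommRing K] {ℓ : ℕ} (p : MvPolynomial (Fin ℓ) K) :
    Module.End K (MvPolynomial (Fin ℓ) K) :=
  LinearMap.mulLeft K p

/-- total degree `|a|` of a multi-index. -/
def mdeg {ℓ : ℕ} (a : Fin ℓ →₀ ℕ) : ℕ := a.sum fun _ n => n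

/-- `a! = a_1! ⋯ a_ℓ!`. -/
def mfact {ℓ : ℕ} (a : Fin ℓ →₀ ℕ) : ℕ := a.prod fun _ n => n.factorial

/-- The operator `Σ_a c_a ∂^a` from a finitely supported coefficient family. -/
noncomputable def sumOp (K : Type) [CommRing K] {ℓ : ℕ}
    (c : (Fin ℓ →₀ ℕ) →₀ MvPolynomial (Fin ℓ) K) :
    Module.End K (MvPolynomial (Fin ℓ) K) :=
  c.sum fun a p => p • pdOp K a

/-- `D^{(m)}(S) = ⊕_{|a|=m} S ∂^a`, as an `S`-submodule of `End_K(S)`. -/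
noncomputable def Dfull (K : Type) [CommRing K] {ℓ : ℕ} (m : ℕ) :
    Submodule (MvPolynomial (Fin ℓ) K) (Module.End K (MvPolynomial (Fin ℓ) K)) :=
  Submodule.span _ {θ | ∃ a : Fin ℓ →₀ ℕ, mdeg a = m ∧ θ = pdOp K a}

/-- Operators preserving the principal ideal `Q·S`. -/
noncomputable def stabMod (K : Type) [CommRing K] {ℓ : ℕ} (Q : MvPolynomial (Fin ℓ) K) :
    Submodule (MvPolynomial (Fin ℓ) K) (Module.End K (MvPolynomial (Fin ℓ) K)) where
  carrier := {θ | ∀ f, θ (Q * f) ∈ Ideal.span {Q}}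
  add_mem' := by
    intro θ η hθ hη f
    simpa using add_mem (hθ f) (hη f)
  zero_mem' := by intro f; simp
  smul_mem' := by
    intro p θ hθ f
    simpa [LinearMap.smul_apply, smul_eq_mul] using Ideal.mul_mem_left _ p (hθ f)

/-- `D^{(m)}` of (the ideal generated by) `Q`:
operators of order `m` preserving `Q·S`. For an arrangement with defining polynomial `Q`
this is `D^{(m)}(𝒜)`. -/
noncomputable def Dmod (K : Type) [CommRing K] {ℓ : ℕ} (m : ℕ) (Q : MvPolynomial (Fin ℓ) K) :
    Submodule (MvPolynomial (Fin ℓ) K) (Module.End K (MvPolynomial (Fin ℓ) K)) :=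
  Dfull K m ⊓ stabMod K Q

/-- `θ` is a homogeneous operator of order `m` and degree `d`. -/
def IsHomOp (K : Type) [CommRing K] {ℓ : ℕ} (m d : ℕ)
    (θ : Module.End K (MvPolynomial (Fin ℓ) K)) : Prop :=
  ∃ c : (Fin ℓ →₀ ℕ) →₀ MvPolynomial (Fin ℓ) K,
    (∀ a ∈ c.support, mdeg a = m) ∧ (∀ a, (c a).IsHomogeneous d) ∧ θ = sumOp K c

/-- A central hyperplane arrangement in `K^ℓ`, given by its (pairwise coprime,
nonzero, homogeneous of degree one) defining linear forms. -/
structure Arrangement (K : Type) [Field K] (ℓ : ℕ) where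
  forms : Finset (MvPolynomial (Fin ℓ) K)
  hom : ∀ α ∈ forms, α.IsHomogeneous 1
  ne_zero : ∀ α ∈ forms, α ≠ 0
  coprime : ∀ α ∈ forms, ∀ β ∈ forms, α ≠ β → IsCoprime α β

/-- The defining polynomial `Q = ∏_{H ∈ 𝒜} α_H`. -/
noncomputable def Arrangement.defQ {K : Type} [Field K] {ℓ : ℕ} (A : Arrangement K ℓ) :
    MvPolynomial (Fin ℓ) K :=
  ∏ α ∈ A.forms, α

/-- The coefficient matrix `M_m(θ_1,…,θ_s)` with entry `θ_j(x^{a(i)})/a(i)!`,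
for a chosen ordering `e` of the degree-`m` multi-indices. -/
noncomputable def coeffMat (K : Type) [Field K] {ℓ s : ℕ}
    (θ : Fin s → Module.End K (MvPolynomial (Fin ℓ) K))
    (e : Fin s → (Fin ℓ →₀ ℕ)) : Matrix (Fin s) (Fin s) (MvPolynomial (Fin ℓ) K) :=
  fun i j => C ((mfact (e i) : K)⁻¹) * (θ j (monomial (e i) 1))

/-! An operator of order `m ≥ 2` is a combination of products of at least two partial
derivatives, so it kills every linear form; in particular `θ α = 0`. Given that, `θ (α f) ∈ αS`
follows by induction on `f`, the step `f ↦ f xᵢ` being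
`θ (α f xᵢ) = [θ, xᵢ] (α f) + xᵢ θ (α f)`. Conversely, commuting an operator that preserves `αS`
with multiplication by any polynomial again gives an operator preserving `αS`. -/

namespace MvPolynomial

variable {R σ : Type*} [CommSemiring R]

lemma IsHomogeneous.isWeightedHomogeneous_int {p : MvPolynomial σ R} {n : ℕ}
    (hp : p.IsHomogeneous n) : p.IsWeightedHomogeneous (fun _ => (1 : ℤ)) n := by
  intro d hd
  have h := hp hd
  simp only [Finsupp.weight_apply, Finsupp.sum, Pi.one_apply] at h ⊢
  rw [← h]
  push_cast
  rfl

lemma IsWeightedHomogeneous.eq_zero_of_neg {w : σ → ℤ} (hw : ∀ i, 0 ≤ w i)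
    {p : MvPolynomial σ R} {n : ℤ} (hp : p.IsWeightedHomogeneous w n) (hn : n < 0) : p = 0 :=
  hp.eq_zero_of_no_monomials fun d hd => by
    have : 0 ≤ Finsupp.weight w d := by
      rw [Finsupp.weight_apply]
      exact Finset.sum_nonneg fun i _ => nsmul_nonneg (hw i) _
    omega

end MvPolynomial

/- Weights are taken in `ℤ` so that an operator lowering the degree past zero lands in a negative
degree, where only `0` is homogeneous. -/
section LowersWeight

variable {R σ M : Type*} [CommSemiring R] [AddCommGroup M] (w : σ → M)

def LowersWeightBy (φ : Module.End R (MvPolynomial σ R)) (k : M) : Prop :=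
  ∀ n p, p.IsWeightedHomogeneous w n → (φ p).IsWeightedHomogeneous w (n - k)

variable {w}

lemma lowersWeightBy_one : LowersWeightBy w (1 : Module.End R (MvPolynomial σ R)) 0 := by
  intro n p hp
  simpa using hp

lemma LowersWeightBy.mul {φ ψ : Module.End R (MvPolynomial σ R)} {k l : M}
    (hφ : LowersWeightBy w φ k) (hψ : LowersWeightBy w ψ l) :
    LowersWeightBy w (φ * ψ) (k + l) := by
  intro n p hp
  simpa [sub_add_eq_sub_sub_swap] using hφ _ _ (hψ n p hp)

lemma LowersWeightBy.pow {φ : Module.End R (MvPolynomial σ R)} {k : M}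
    (hφ : LowersWeightBy w φ k) (e : ℕ) : LowersWeightBy w (φ ^ e) (e • k) := by
  induction e with
  | zero => simpa using lowersWeightBy_one
  | succ e ih => simpa [pow_succ, succ_nsmul] using ih.mul hφ

lemma LowersWeightBy.prod_ofFn {n : ℕ} {φ : Fin n → Module.End R (MvPolynomial σ R)}
    {k : Fin n → M} (hφ : ∀ i, LowersWeightBy w (φ i) (k i)) :
    LowersWeightBy w (List.ofFn φ).prod (∑ i, k i) := by
  induction n with
  | zero => simpa using lowersWeightBy_one
  | succ n ih =>
    rw [List.ofFn_succ, List.prod_cons, Fin.sum_univ_succ]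
    exact (hφ 0).mul (ih fun i => hφ i.succ)

lemma lowersWeightBy_pderiv (i : σ) :
    LowersWeightBy w (pderiv i : Derivation R (MvPolynomial σ R) (MvPolynomial σ R)).toLinearMap
      (w i) :=
  fun _ _ hp => hp.pderiv (sub_add_cancel _ _)

end LowersWeight

section
variable {K : Type} [CommRing K] {ℓ : ℕ}

lemma lowersWeightBy_pdOp (a : Fin ℓ →₀ ℕ) :
    LowersWeightBy (fun _ => (1 : ℤ)) (pdOp K a) (mdeg a) := by
  have h := LowersWeightBy.prod_ofFn fun i : Fin ℓ =>
    (lowersWeightBy_pderiv (R := K) (w := fun _ => (1 : ℤ)) i).pow (a i)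
  rw [pdOp, mdeg, Finsupp.sum_fintype _ _ fun _ => rfl]
  simpa using h

lemma pdOp_apply_eq_zero_of_lt {a : Fin ℓ →₀ ℕ} {p : MvPolynomial (Fin ℓ) K} {d : ℕ}
    (hp : p.IsHomogeneous d) (hd : d < mdeg a) : pdOp K a p = 0 :=
  (lowersWeightBy_pdOp a _ _ hp.isWeightedHomogeneous_int).eq_zero_of_neg (fun _ => zero_le_one)
    (by omega)

lemma apply_eq_zero_of_mem_Dfull {m d : ℕ} {θ : Module.End K (MvPolynomial (Fin ℓ) K)}
    (hθ : θ ∈ Dfull K m) {p : MvPolynomial (Fin ℓ) K} (hp : p.IsHomogeneous d) (hd : d < m) :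
    θ p = 0 := by
  induction hθ using Submodule.span_induction with
  | mem θ' hθ' =>
    obtain ⟨a, rfl, rfl⟩ := hθ'
    exact pdOp_apply_eq_zero_of_lt hp hd
  | zero => rfl
  | add φ ψ _ _ hφ hψ => simp [hφ, hψ]
  | smul q φ _ hφ => simp [hφ]

end

section
variable {K : Type} [CommRing K] {ℓ : ℕ} {Q : MvPolynomial (Fin ℓ) K}
  {θ : Module.End K (MvPolynomial (Fin ℓ) K)}

lemma commutator_mulOp_apply (p f : MvPolynomial (Fin ℓ) K) :
    (θ * mulOp K p - mulOp K p * θ) f = θ (p * f) - p * θ f :=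
  rfl

lemma commutator_mulOp_mem_stabMod (hθ : θ ∈ stabMod K Q) (p : MvPolynomial (Fin ℓ) K) :
    θ * mulOp K p - mulOp K p * θ ∈ stabMod K Q := by
  intro f
  rw [commutator_mulOp_apply, mul_left_comm]
  exact sub_mem (hθ _) (Ideal.mul_mem_left _ _ (hθ f))

lemma mem_stabMod_of_commutator_mem (hQ : θ Q ∈ Ideal.span {Q})
    (hcomm : ∀ i, θ * mulOp K (X i) - mulOp K (X i) * θ ∈ stabMod K Q) : θ ∈ stabMod K Q := by
  intro f
  induction f using MvPolynomial.induction_on with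
  | C c =>
    rw [mul_comm, ← smul_eq_C_mul, map_smul]
    exact Submodule.smul_of_tower_mem _ c hQ
  | add f g hf hg =>
    rw [mul_add, map_add]
    exact add_mem hf hg
  | mul_X f i hf =>
    have h := hcomm i f
    rw [commutator_mulOp_apply, mul_left_comm, mul_comm (X i)] at h
    simpa using add_mem h (Ideal.mul_mem_left _ (X i) hf)

end

theorem mem_stab_iff_commutators_general (K : Type) [Field K] {ℓ : ℕ}
    (m : ℕ) (hm : 2 ≤ m) (α : MvPolynomial (Fin ℓ) K)
    (hα : α.IsHomogeneous 1)
    (θ : Module.End K (MvPolynomial (Fin ℓ) K)) (hθ : θ ∈ Dfull K (ℓ := ℓ) m) :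
    θ ∈ stabMod K α ↔
      ∀ i : Fin ℓ, θ * mulOp K (X i) - mulOp K (X i) * θ ∈ stabMod K α := by
  have hθα : θ α = 0 := apply_eq_zero_of_mem_Dfull hθ hα hm
  exact ⟨fun h i => commutator_mulOp_mem_stabMod h (X i),
    mem_stabMod_of_commutator_mem (by simp [hθα])⟩

theorem mem_stab_iff_commutators (K : Type) [Field K] [CharZero K] {ℓ : ℕ}
    (m : ℕ) (hm : 2 ≤ m) (α : MvPolynomial (Fin ℓ) K)
    (hα : α.IsHomogeneous 1) (hα0 : α ≠ 0)
    (θ : Module.End K (MvPolynomial (Fin ℓ) K)) (hθ : θ ∈ Dfull K (ℓ := ℓ) m) :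
    θ ∈ stabMod K α ↔
      ∀ i : Fin ℓ, θ * mulOp K (X i) - mulOp K (X i) * θ ∈ stabMod K α :=
  mem_stab_iff_commutators_general K m hm α hα θ hθ
end

section
/- Let α be a nonzero linear form and θ ∈ D^(m)(S). Then θ(αS) ⊆ αS if and only if θ(α x^a) ∈ αS for every multi-index a ∈ ℕ^ℓ with |a| = m − 1. -/
open MvPolynomial

noncomputable def pd (K : Type) [CommRing K] {ℓ : ℕ} (i : Fin ℓ) :
    Module.End K (MvPolynomial (Fin ℓ) K) :=
  (pderiv i : Derivation K (MvPolynomial (Fin ℓ) K) (MvPolynomial (Fin ℓ) K)).toLinearMap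
lemma pd_apply {K : Type} [CommRing K] {ℓ : ℕ} (i : Fin ℓ) (f : MvPolynomial (Fin ℓ) K) :
    pd K i f = pderiv i f := rfl
lemma pdOp_eq_list {K : Type} [CommRing K] {ℓ : ℕ} (a : Fin ℓ →₀ ℕ) :
    pdOp K a = ((List.finRange ℓ).map fun i => pd K i ^ (a i)).prod := by
  rw [pdOp, List.ofFn_eq_map]; rfl


section helperlemmas
variable {K : Type} [CommRing K] {ℓ : ℕ}

lemma listsum_single_apply (a : Fin ℓ →₀ ℕ) (t : List (Fin ℓ)) (i : Fin ℓ) (h : i ∉ t) :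
    ((t.map fun j => Finsupp.single j (a j)).sum) i = 0 := by
  induction t with
  | nil => simp
  | cons j t ih =>
    simp only [List.mem_cons, not_or] at h
    simp [List.sum_cons, Finsupp.add_apply, Finsupp.single_apply, Ne.symm h.1, ih h.2]


lemma pd_pow_monomial (i : Fin ℓ) (k : ℕ) (s : Fin ℓ →₀ ℕ) (r : K) :
    (pd K i ^ k) (monomial s r)
      = monomial (s - Finsupp.single i k) (r * ((s i).descFactorial k : K)) := by
  induction k with
  | zero => simp
  | succ k ih =>
    rw [pow_succ', Module.End.mul_apply, ih, pd_apply, pderiv_monomial]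
    have h1 : s - Finsupp.single i k - Finsupp.single i 1 = s - Finsupp.single i (k + 1) := by
      rw [tsub_tsub, ← Finsupp.single_add]
    have h2 : (s - Finsupp.single i k) i = s i - k := by
      simp [Finsupp.tsub_apply]
    rw [h1, h2, Nat.descFactorial_succ]
    congr 1
    push_cast [Nat.cast_mul]
    ring

lemma listOp_monomial (a : Fin ℓ →₀ ℕ) (L : List (Fin ℓ)) (hL : L.Nodup) (s : Fin ℓ →₀ ℕ) (r : K) :
    (L.map fun i => pd K i ^ (a i)).prod (monomial s r)
      = monomial (s - (L.map fun i => Finsupp.single i (a i)).sum)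
          (r * (L.map fun i => ((s i).descFactorial (a i) : K)).prod) := by
  induction L with
  | nil => simp
  | cons i t ih =>
    obtain ⟨hit, ht⟩ := List.nodup_cons.mp hL
    rw [List.map_cons, List.prod_cons, Module.End.mul_apply, ih ht, pd_pow_monomial]
    have hA : ((t.map fun j => Finsupp.single j (a j)).sum) i = 0 := listsum_single_apply a t i hit
    have h2 : (s - (t.map fun j => Finsupp.single j (a j)).sum) i = s i := by
      simp [Finsupp.tsub_apply, hA]
    rw [h2]
    congr 1
    · rw [tsub_tsub, List.map_cons, List.sum_cons, add_comm]
    · rw [List.map_cons, List.prod_cons]; ring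



lemma pdOp_apply_monomial (a s : Fin ℓ →₀ ℕ) (r : K) :
    pdOp K a (monomial s r)
      = monomial (s - a) (r * ∏ i, ((s i).descFactorial (a i) : K)) := by
  rw [pdOp_eq_list, listOp_monomial a _ (List.nodup_finRange ℓ)]
  have h1 : ((List.finRange ℓ).map fun i => Finsupp.single i (a i)).sum = a := by
    rw [← Fin.sum_univ_def (fun i => Finsupp.single i (a i)), Finsupp.univ_sum_single]
  have h2 : ((List.finRange ℓ).map fun i => ((s i).descFactorial (a i) : K)).prod
      = ∏ i, ((s i).descFactorial (a i) : K) := (Fin.prod_univ_def _).symm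
  rw [h1, h2]

lemma mdeg_eq_sum (a : Fin ℓ →₀ ℕ) : mdeg a = ∑ i, a i :=
  Finsupp.sum_fintype _ _ (fun _ => rfl)

lemma exists_lt_of_mdeg (a b : Fin ℓ →₀ ℕ) (h1 : mdeg b ≤ mdeg a) (h2 : a ≠ b) :
    ∃ i, b i < a i := by
  by_contra h
  push_neg at h
  obtain ⟨j, hj⟩ := Finsupp.ne_iff.mp h2
  have : ∑ i, a i < ∑ i, b i :=
    Finset.sum_lt_sum (fun i _ => h i) ⟨j, Finset.mem_univ j, lt_of_le_of_ne (h j) hj⟩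
  rw [← mdeg_eq_sum, ← mdeg_eq_sum] at this
  omega

lemma pdOp_monomial_zero {a b : Fin ℓ →₀ ℕ} (h1 : mdeg b ≤ mdeg a) (h2 : a ≠ b) :
    pdOp K a (monomial b (1 : K)) = 0 := by
  obtain ⟨i, hi⟩ := exists_lt_of_mdeg a b h1 h2
  rw [pdOp_apply_monomial]
  have : ((b i).descFactorial (a i) : K) = 0 := by
    rw [Nat.descFactorial_eq_zero_iff_lt.mpr hi, Nat.cast_zero]
  rw [Finset.prod_eq_zero (Finset.mem_univ i) this, mul_zero, map_zero]

lemma pdOp_monomial_zero' {a b : Fin ℓ →₀ ℕ} (h1 : mdeg b < mdeg a) :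
    pdOp K a (monomial b (1 : K)) = 0 :=
  pdOp_monomial_zero h1.le (by rintro rfl; exact lt_irrefl _ h1)

lemma mfact_ne_zero (b : Fin ℓ →₀ ℕ) : mfact b ≠ 0 := by
  have : 0 < mfact b := Finset.prod_pos fun i _ => Nat.factorial_pos _
  omega

lemma pdOp_monomial_self (a : Fin ℓ →₀ ℕ) :
    pdOp K a (monomial a (1 : K)) = C (mfact a : K) := by
  rw [pdOp_apply_monomial, tsub_self, one_mul]
  have : mfact a = ∏ i, (a i).factorial := Finsupp.prod_fintype _ _ (fun _ => rfl)
  rw [this, Nat.cast_prod, C_apply]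
  congr 1
  exact Finset.prod_congr rfl fun i _ => by rw [Nat.descFactorial_self]



lemma pd_pow_leibniz (i : Fin ℓ) (g : MvPolynomial (Fin ℓ) K)
    (hg : pderiv i (pderiv i g) = 0) (k : ℕ) (f : MvPolynomial (Fin ℓ) K) :
    (pd K i ^ k) (g * f)
      = g * (pd K i ^ k) f + k • (pderiv i g * (pd K i ^ (k - 1)) f) := by
  induction k with
  | zero => simp
  | succ k ih =>
    rw [pow_succ', Module.End.mul_apply, ih, map_add, pd_apply, pderiv_mul]
    cases k with
    | zero =>
      simp [pow_succ', pd_apply]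
      ring
    | succ k =>
      rw [map_nsmul, pd_apply, pderiv_mul, hg, zero_mul, zero_add]
      have h1 : pderiv i ((pd K i ^ (k + 1 - 1)) f) = (pd K i ^ (k + 1)) f := by
        rw [Nat.add_sub_cancel, ← pd_apply, ← Module.End.mul_apply, ← pow_succ']
      have h2 : pderiv i ((pd K i ^ (k + 1)) f) = (pd K i ^ (k + 1 + 1)) f := by
        rw [← pd_apply, ← Module.End.mul_apply, ← pow_succ']
      rw [h1, h2]
      simp only [Nat.add_sub_cancel]
      rw [succ_nsmul (pderiv i g * (pd K i ^ (k + 1)) f) (k + 1)]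
      set B := (pd K i ^ (k + 1 + 1)) f with hB
      set A := (pd K i ^ (k + 1)) f with hA
      set D := pderiv i g * A with hD
      have h3 : (pd K i * pd K i ^ (k + 1)) f = B := by rw [hB, pow_succ' (pd K i) (k + 1)]
      rw [h3]
      abel

noncomputable def msub (a : Fin ℓ →₀ ℕ) (i : Fin ℓ) : Fin ℓ →₀ ℕ := a - Finsupp.single i 1

lemma fs_sub_apply_ne (a : Fin ℓ →₀ ℕ) (i j : Fin ℓ) (h : j ≠ i) :
    msub a i j = a j := by
  simp [msub, Finsupp.tsub_apply, Finsupp.single_apply, Ne.symm h]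

lemma fs_sub_apply_self (a : Fin ℓ →₀ ℕ) (i : Fin ℓ) : msub a i i = a i - 1 := by
  simp [msub, Finsupp.tsub_apply]

lemma listOp_congr (a b : Fin ℓ →₀ ℕ) (L : List (Fin ℓ)) (h : ∀ i ∈ L, a i = b i) :
    (L.map fun i => pd K i ^ a i).prod = (L.map fun i => pd K i ^ b i).prod := by
  congr 1
  exact List.map_congr_left fun i hi => by rw [h i hi]

lemma listOp_leibniz (g : MvPolynomial (Fin ℓ) K)
    (hg : ∀ i j : Fin ℓ, pderiv j (pderiv i g) = 0)
    (a : Fin ℓ →₀ ℕ) (L : List (Fin ℓ)) (hL : L.Nodup) (f : MvPolynomial (Fin ℓ) K) :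
    (L.map fun i => pd K i ^ a i).prod (g * f)
      = g * (L.map fun i => pd K i ^ a i).prod f
        + (L.map fun i => (a i) • (pderiv i g *
            (L.map fun j => pd K j ^ (msub a i j)).prod f)).sum := by
  induction L with
  | nil => simp
  | cons i t ih =>
    obtain ⟨hit, ht⟩ := List.nodup_cons.mp hL
    rw [List.map_cons, List.prod_cons, Module.End.mul_apply, ih ht, map_add]
    set T := (t.map fun j => pd K j ^ a j).prod f with hT
    have e1 : (pd K i ^ a i) (g * T)
        = g * (pd K i ^ a i) T + (a i) • (pderiv i g * (pd K i ^ (a i - 1)) T) :=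
      pd_pow_leibniz i g (hg i i) (a i) T
    have e2 : (pd K i ^ a i) ((t.map fun j => (a j) • (pderiv j g *
          (t.map fun j' => pd K j' ^ (msub a j j')).prod f)).sum)
        = (t.map fun j => (a j) • (pderiv j g *
            (((i :: t).map fun j' => pd K j' ^ (msub a j j')).prod f))).sum := by
      rw [map_list_sum, List.map_map]
      congr 1
      apply List.map_congr_left
      intro j hj
      have hji : j ≠ i := fun h => hit (h ▸ hj)
      have hij : i ≠ j := Ne.symm hji
      simp only [Function.comp_apply]
      rw [map_nsmul]
      congr 1
      have h2 : pderiv i (pderiv i (pderiv j g)) = 0 := by rw [hg j i, map_zero]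
      rw [pd_pow_leibniz i (pderiv j g) h2, hg j i, zero_mul, smul_zero, add_zero]
      congr 1
      rw [List.map_cons, List.prod_cons, Module.End.mul_apply]
      congr 2
      rw [fs_sub_apply_ne a j i hij]
    have e3 : ((i :: t).map fun j' => pd K j' ^ (msub a i j')).prod f
        = (pd K i ^ (a i - 1)) T := by
      rw [List.map_cons, List.prod_cons, Module.End.mul_apply]
      rw [fs_sub_apply_self, hT]
      congr 2
      exact listOp_congr (msub a i) a t fun j hj => fs_sub_apply_ne a i j (fun h => hit (h ▸ hj))
    have e4 : g * ((pd K i ^ a i * (List.map (fun j => pd K j ^ a j) t).prod) f)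
        = g * (pd K i ^ a i) T := by rw [Module.End.mul_apply, ← hT]
    have e5 : (a i • (pderiv i g * ((List.map (fun j' => pd K j' ^ (msub a i j')) (i :: t)).prod f)))
          + (List.map (fun j => a j • (pderiv j g *
              ((List.map (fun j' => pd K j' ^ (msub a j j')) (i :: t)).prod f))) t).sum
        = (List.map (fun i' => a i' • (pderiv i' g *
            ((List.map (fun j => pd K j ^ (msub a i' j)) (i :: t)).prod f))) (i :: t)).sum := by
      simp only [List.map_cons, List.sum_cons]
    rw [e1, e2, ← e3, e4, add_assoc, e5]

lemma pdOp_leibniz (g : MvPolynomial (Fin ℓ) K)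
    (hg : ∀ i j : Fin ℓ, pderiv j (pderiv i g) = 0) (a : Fin ℓ →₀ ℕ)
    (f : MvPolynomial (Fin ℓ) K) :
    pdOp K a (g * f)
      = g * pdOp K a f + ∑ i, (a i) • (pderiv i g * pdOp K (msub a i) f) := by
  simp only [pdOp_eq_list]
  rw [listOp_leibniz g hg a _ (List.nodup_finRange ℓ), Fin.sum_univ_def]

lemma mdeg_eq_sum' (a : Fin ℓ →₀ ℕ) : (a.sum fun _ n => n) = ∑ i, a i :=
  Finsupp.sum_fintype _ _ (fun _ => rfl)

lemma second_pderiv_zero {α : MvPolynomial (Fin ℓ) K} (hα : α.IsHomogeneous 1) (i j : Fin ℓ) :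
    pderiv j (pderiv i α) = 0 := by
  conv_lhs => rw [α.as_sum]
  rw [map_sum, map_sum]
  apply Finset.sum_eq_zero
  intro s hs
  have hdeg : s.degree = 1 := by
    by_contra h
    exact (mem_support_iff.mp hs) (hα.coeff_eq_zero h)
  have hsum : ∑ k, s k = 1 := by
    rw [← mdeg_eq_sum' s]
    exact hdeg
  rw [pderiv_monomial]
  by_cases h : s i = 0
  · rw [h, Nat.cast_zero, mul_zero, map_zero, map_zero]
  · rw [pderiv_monomial]
    have hz : (s - Finsupp.single i 1 : Fin ℓ →₀ ℕ) j = 0 := by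
      rcases eq_or_ne j i with rfl | hne
      · have : s j ≤ 1 := by
          rw [← hsum]
          exact Finset.single_le_sum (fun k _ => Nat.zero_le _) (Finset.mem_univ j)
        simp [Finsupp.tsub_apply]
        omega
      · have hsub : ({i, j} : Finset (Fin ℓ)) ⊆ Finset.univ := Finset.subset_univ _
        have : s i + s j ≤ 1 := by
          rw [← hsum]
          calc s i + s j = ∑ k ∈ ({i, j} : Finset (Fin ℓ)), s k :=
                (Finset.sum_pair (Ne.symm hne)).symm
            _ ≤ ∑ k, s k := Finset.sum_le_sum_of_subset hsub
        have hj0 : s j = 0 := by omega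
        simp [Finsupp.tsub_apply, Finsupp.single_apply, Ne.symm hne, hj0]
    rw [hz, Nat.cast_zero, mul_zero, map_zero]

lemma fs_sub_add (a : Fin ℓ →₀ ℕ) (i : Fin ℓ) (h : a i ≠ 0) :
    msub a i + Finsupp.single i 1 = a := by
  ext j
  rcases eq_or_ne j i with rfl | hne
  · simp [msub, Finsupp.add_apply, Finsupp.tsub_apply]
    omega
  · simp [msub, Finsupp.add_apply, Finsupp.tsub_apply, Finsupp.single_apply, Ne.symm hne]

lemma fs_add_sub (b : Fin ℓ →₀ ℕ) (i : Fin ℓ) :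
    msub (b + Finsupp.single i 1) i = b := by
  ext j
  rcases eq_or_ne j i with rfl | hne
  · simp [msub, Finsupp.add_apply, Finsupp.tsub_apply]
  · simp [msub, Finsupp.add_apply, Finsupp.tsub_apply, Finsupp.single_apply, Ne.symm hne]

lemma msub_eq_self (a : Fin ℓ →₀ ℕ) (i : Fin ℓ) (h : a i = 0) : msub a i = a := by
  ext j
  rcases eq_or_ne j i with rfl | hne
  · simp [msub, Finsupp.tsub_apply, h]
  · simp [msub, Finsupp.tsub_apply, Finsupp.single_apply, Ne.symm hne]

lemma mdeg_add_single (b : Fin ℓ →₀ ℕ) (i : Fin ℓ) :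
    mdeg (b + Finsupp.single i 1) = mdeg b + 1 := by
  rw [mdeg_eq_sum, mdeg_eq_sum]
  simp only [Finsupp.add_apply]
  rw [Finset.sum_add_distrib]
  congr 1
  simp [Finsupp.single_apply]

lemma mdeg_zero {a : Fin ℓ →₀ ℕ} (h : mdeg a = 0) : a = 0 := by
  rw [mdeg_eq_sum] at h
  ext j
  have := (Finset.sum_eq_zero_iff.mp h) j (Finset.mem_univ j)
  simpa using this

lemma pdOp_zero_apply (f : MvPolynomial (Fin ℓ) K) : pdOp K (0 : Fin ℓ →₀ ℕ) f = f := by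
  rw [pdOp_eq_list]
  have : ((List.finRange ℓ).map fun i => pd K i ^ ((0 : Fin ℓ →₀ ℕ) i)).prod = 1 := by
    apply List.prod_eq_one
    intro x hx
    obtain ⟨i, _, rfl⟩ := List.mem_map.mp hx
    simp
  rw [this]
  rfl

lemma sumOp_apply (c : (Fin ℓ →₀ ℕ) →₀ MvPolynomial (Fin ℓ) K) (f : MvPolynomial (Fin ℓ) K) :
    sumOp K c f = ∑ a ∈ c.support, c a * pdOp K a f := by
  simp [sumOp, Finsupp.sum, LinearMap.sum_apply, LinearMap.smul_apply, smul_eq_mul]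

lemma exists_rep {m : ℕ} {θ : Module.End K (MvPolynomial (Fin ℓ) K)}
    (hθ : θ ∈ Dfull K (ℓ := ℓ) m) :
    ∃ c : (Fin ℓ →₀ ℕ) →₀ MvPolynomial (Fin ℓ) K,
      (∀ a ∈ c.support, mdeg a = m) ∧ θ = sumOp K c := by
  classical
  set Φ : ((Fin ℓ →₀ ℕ) →₀ MvPolynomial (Fin ℓ) K) →ₗ[MvPolynomial (Fin ℓ) K]
      Module.End K (MvPolynomial (Fin ℓ) K) :=
    Finsupp.lsum (MvPolynomial (Fin ℓ) K) (fun a => LinearMap.toSpanSingleton _ _ (pdOp K a))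
    with hΦ
  have hle : Dfull K (ℓ := ℓ) m
      ≤ Submodule.map Φ (Finsupp.supported _ _ {a : Fin ℓ →₀ ℕ | mdeg a = m}) := by
    rw [Dfull]
    apply Submodule.span_le.mpr
    rintro θ' ⟨a, ha, rfl⟩
    refine ⟨Finsupp.single a 1, Finsupp.single_mem_supported _ 1 ha, ?_⟩
    rw [hΦ]
    simp [LinearMap.toSpanSingleton_apply]
  obtain ⟨c, hc, hΦc⟩ := hle hθ
  refine ⟨c, fun a ha => (Finsupp.mem_supported _ c).mp hc ha, ?_⟩
  rw [← hΦc, hΦ, sumOp, Finsupp.lsum_apply]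
  apply Finsupp.sum_congr
  intro a _
  rw [LinearMap.toSpanSingleton_apply]

end helperlemmas

theorem mem_stab_iff_monomials (K : Type) [Field K] [CharZero K] {ℓ m : ℕ}
    (α : MvPolynomial (Fin ℓ) K) (hα : α.IsHomogeneous 1) (hα0 : α ≠ 0)
    (θ : Module.End K (MvPolynomial (Fin ℓ) K)) (hθ : θ ∈ Dfull K (ℓ := ℓ) m) :
    θ ∈ stabMod K α ↔
      ∀ a : Fin ℓ →₀ ℕ, mdeg a = m - 1 →
        θ (α * monomial a 1) ∈ Ideal.span {α} := by
  constructor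
  · intro hstab a _
    exact hstab (monomial a 1)
  · intro hmon
    classical
    obtain ⟨c, hcsupp, rfl⟩ := exists_rep hθ
    rcases Nat.eq_zero_or_pos m with rfl | hm
    · -- m = 0 : trivial case
      intro f
      rw [sumOp_apply]
      apply Ideal.sum_mem
      intro a ha
      rw [mdeg_zero (hcsupp a ha), pdOp_zero_apply]
      exact Ideal.mem_span_singleton.mpr ⟨c 0 * f, by ring⟩
    · -- main case m ≥ 1
      set T : Finset (Fin ℓ →₀ ℕ) :=
        c.support.biUnion (fun a => Finset.image (fun i => msub a i) Finset.univ) with hTdef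
      set Q : (Fin ℓ →₀ ℕ) → MvPolynomial (Fin ℓ) K :=
        fun b => ∑ i, ((b i + 1) : ℕ) • (c (b + Finsupp.single i 1) * pderiv i α) with hQdef
      have hsec : ∀ i j : Fin ℓ, pderiv j (pderiv i α) = 0 := second_pderiv_zero hα
      have hmemT : ∀ b : Fin ℓ →₀ ℕ, ∀ i : Fin ℓ,
          b + Finsupp.single i 1 ∈ c.support → b ∈ T := by
        intro b i hb
        rw [hTdef]
        apply Finset.mem_biUnion.mpr
        exact ⟨b + Finsupp.single i 1, hb,
          Finset.mem_image.mpr ⟨i, Finset.mem_univ i, fs_add_sub b i⟩⟩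
      -- the key Leibniz identity
      have key : ∀ f, sumOp K c (α * f)
          = α * sumOp K c f + ∑ b ∈ T, Q b * pdOp K b f := by
        intro f
        rw [sumOp_apply, sumOp_apply]
        have h1 : ∀ a ∈ c.support, c a * pdOp K a (α * f)
            = c a * (α * pdOp K a f)
              + ∑ i, (a i) • (c a * (pderiv i α * pdOp K (msub a i) f)) := by
          intro a _
          rw [pdOp_leibniz α hsec a f, mul_add, Finset.mul_sum]
          congr 1
          exact Finset.sum_congr rfl fun i _ => mul_smul_comm _ _ _
        rw [Finset.sum_congr rfl h1, Finset.sum_add_distrib]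
        congr 1
        · rw [Finset.mul_sum]
          exact Finset.sum_congr rfl fun a _ => by ring
        · have hR : ∀ b, Q b * pdOp K b f
              = ∑ i, ((b i + 1) : ℕ) •
                  (c (b + Finsupp.single i 1) * pderiv i α * pdOp K b f) := by
            intro b
            rw [hQdef]
            simp only [Finset.sum_mul, smul_mul_assoc]
          have hc1 : (∑ a ∈ c.support, ∑ i, (a i) • (c a * (pderiv i α * pdOp K (msub a i) f)))
              = ∑ i, ∑ a ∈ c.support, (a i) • (c a * (pderiv i α * pdOp K (msub a i) f)) :=
            Finset.sum_comm
          have hc2 : (∑ b ∈ T, ∑ i, ((b i + 1) : ℕ) •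
                  (c (b + Finsupp.single i 1) * pderiv i α * pdOp K b f))
              = ∑ i, ∑ b ∈ T, ((b i + 1) : ℕ) •
                  (c (b + Finsupp.single i 1) * pderiv i α * pdOp K b f) :=
            Finset.sum_comm
          rw [Finset.sum_congr rfl fun b _ => hR b, hc1, hc2]
          apply Finset.sum_congr rfl
          intro i _
          have L1 : (∑ a ∈ c.support, (a i) • (c a * (pderiv i α * pdOp K (msub a i) f)))
              = ∑ a ∈ c.support.filter (fun a => a i ≠ 0),
                  (a i) • (c a * (pderiv i α * pdOp K (msub a i) f)) := by
            refine (Finset.sum_filter_of_ne ?_).symm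
            intro a _ hne
            intro h0
            rw [h0] at hne
            simp at hne
          have L2 : (∑ b ∈ T, ((b i + 1) : ℕ) •
                  (c (b + Finsupp.single i 1) * pderiv i α * pdOp K b f))
              = ∑ b ∈ T.filter (fun b => b + Finsupp.single i 1 ∈ c.support),
                  ((b i + 1) : ℕ) •
                  (c (b + Finsupp.single i 1) * pderiv i α * pdOp K b f) := by
            refine (Finset.sum_filter_of_ne ?_).symm
            intro b _ hne
            by_contra hns
            rw [Finsupp.notMem_support_iff.mp hns] at hne
            simp at hne
          rw [L1, L2]
          refine Finset.sum_nbij' (fun a => msub a i) (fun b => b + Finsupp.single i 1)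
            ?_ ?_ ?_ ?_ ?_
          · intro a ha
            obtain ⟨haS, hai⟩ := Finset.mem_filter.mp ha
            apply Finset.mem_filter.mpr
            refine ⟨?_, ?_⟩
            · rw [hTdef]
              exact Finset.mem_biUnion.mpr ⟨a, haS,
                Finset.mem_image.mpr ⟨i, Finset.mem_univ i, rfl⟩⟩
            · rw [fs_sub_add a i hai]
              exact haS
          · intro b hb
            obtain ⟨hbT, hbS⟩ := Finset.mem_filter.mp hb
            apply Finset.mem_filter.mpr
            refine ⟨hbS, ?_⟩
            simp [Finsupp.add_apply]
          · intro a ha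
            obtain ⟨_, hai⟩ := Finset.mem_filter.mp ha
            exact fs_sub_add a i hai
          · intro b hb
            exact fs_add_sub b i
          · intro a ha
            obtain ⟨_, hai⟩ := Finset.mem_filter.mp ha
            rw [fs_sub_add a i hai, fs_sub_apply_self]
            have : a i - 1 + 1 = a i := by omega
            rw [this, mul_assoc]
      -- degrees of elements of T
      have hTdeg : ∀ b ∈ T, mdeg b = m ∨ mdeg b + 1 = m := by
        intro b hb
        rw [hTdef] at hb
        obtain ⟨a, haS, hbi⟩ := Finset.mem_biUnion.mp hb
        obtain ⟨i, _, rfl⟩ := Finset.mem_image.mp hbi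
        by_cases hai : a i = 0
        · left
          rw [msub_eq_self a i hai]
          exact hcsupp a haS
        · right
          have := mdeg_add_single (msub a i) i
          rw [fs_sub_add a i hai] at this
          rw [← this]
          exact hcsupp a haS
      -- Q vanishes away from degree m - 1
      have hQzero : ∀ b : Fin ℓ →₀ ℕ, mdeg b ≠ m - 1 → Q b = 0 := by
        intro b hb
        rw [hQdef]
        apply Finset.sum_eq_zero
        intro i _
        have hc0 : c (b + Finsupp.single i 1) = 0 := by
          by_contra h0
          have hmem : b + Finsupp.single i 1 ∈ c.support := Finsupp.mem_support_iff.mpr h0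
          have := hcsupp _ hmem
          rw [mdeg_add_single] at this
          omega
        rw [hc0, zero_mul, smul_zero]
      -- the extraction identity
      have hextract : ∀ b : Fin ℓ →₀ ℕ, mdeg b = m - 1 →
          sumOp K c (α * monomial b 1) = Q b * C ((mfact b : K)) := by
        intro b hb
        rw [key (monomial b 1)]
        have h0 : sumOp K c (monomial b (1 : K)) = 0 := by
          rw [sumOp_apply]
          apply Finset.sum_eq_zero
          intro a ha
          rw [pdOp_monomial_zero' (by rw [hcsupp a ha]; omega), mul_zero]
        rw [h0, mul_zero, zero_add]
        have hvanish : ∀ b' ∈ T, b' ≠ b → Q b' * pdOp K b' (monomial b 1) = 0 := by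
          intro b' hb' hne
          have hd := hTdeg b' hb'
          rw [pdOp_monomial_zero (by omega) hne, mul_zero]
        by_cases hbT : b ∈ T
        · rw [Finset.sum_eq_single_of_mem b hbT (fun b' hb' hne => hvanish b' hb' hne),
            pdOp_monomial_self]
        · have hQb : Q b = 0 := by
            rw [hQdef]
            apply Finset.sum_eq_zero
            intro i _
            have : c (b + Finsupp.single i 1) = 0 := by
              by_contra h0
              exact hbT (hmemT b i (Finsupp.mem_support_iff.mpr h0))
            rw [this, zero_mul, smul_zero]
          rw [hQb, zero_mul]
          apply Finset.sum_eq_zero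
          intro b' hb'
          exact hvanish b' hb' (fun h => hbT (h ▸ hb'))
      -- membership of the Q's
      have hQmem : ∀ b ∈ T, Q b ∈ Ideal.span {α} := by
        intro b hb
        by_cases hdb : mdeg b = m - 1
        · have hmem := hmon b hdb
          rw [hextract b hdb] at hmem
          rw [Ideal.mem_span_singleton] at hmem ⊢
          have hk : ((mfact b : K)) ≠ 0 := Nat.cast_ne_zero.mpr (mfact_ne_zero b)
          have hQeq : Q b = (Q b * C ((mfact b : K))) * C (((mfact b : K))⁻¹) := by
            rw [mul_assoc, ← C_mul, mul_inv_cancel₀ hk, C_1, mul_one]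
          rw [hQeq]
          exact hmem.mul_right _
        · rw [hQzero b hdb]
          exact dvd_zero α |>.elim (fun _ _ => trivial) |> fun _ => zero_mem _
      intro f
      rw [key f]
      apply Ideal.add_mem
      · exact Ideal.mem_span_singleton.mpr (dvd_mul_right α _)
      · exact Ideal.sum_mem _ fun b hb => Ideal.mul_mem_right _ _ (hQmem b hb)
end

section
/- Let A₁ ⊂ V₁ and A₂ ⊂ V₂ be central arrangements in spaces of positive dimension. For θ ∈ D^(i)(A₁) (acting in the x-variables), η ∈ D^(j)(A₂) (acting in the y-variables), the product θη lies in D^(i+j)(A₁ × A₂); consequently S·D^(i)(A₁)·D^(j)(A₂) ⊆ D^(i+j)(A₁ × A₂). -/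
open MvPolynomial

/-- Lift a multi-index on the first `ℓ₁` (`x`-)variables to `ℓ₁ + ℓ₂` variables. -/
noncomputable def liftIdx₁ {ℓ₁ ℓ₂ : ℕ} (a : Fin ℓ₁ →₀ ℕ) : Fin (ℓ₁ + ℓ₂) →₀ ℕ :=
  a.embDomain (Fin.castAddEmb ℓ₂)

/-- Lift a multi-index on the last `ℓ₂` (`y`-)variables to `ℓ₁ + ℓ₂` variables. -/
noncomputable def liftIdx₂ {ℓ₁ ℓ₂ : ℕ} (b : Fin ℓ₂ →₀ ℕ) : Fin (ℓ₁ + ℓ₂) →₀ ℕ :=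
  b.embDomain (Fin.natAddEmb ℓ₁)

/-- Lift a polynomial in the `x`-variables to `S = S₁ ⊗ S₂`. -/
noncomputable def liftPoly₁ (K : Type) [CommRing K] {ℓ₁ ℓ₂ : ℕ}
    (p : MvPolynomial (Fin ℓ₁) K) : MvPolynomial (Fin (ℓ₁ + ℓ₂)) K :=
  rename (Fin.castAdd ℓ₂) p

/-- Lift a polynomial in the `y`-variables to `S = S₁ ⊗ S₂`. -/
noncomputable def liftPoly₂ (K : Type) [CommRing K] {ℓ₁ ℓ₂ : ℕ}
    (q : MvPolynomial (Fin ℓ₂) K) : MvPolynomial (Fin (ℓ₁ + ℓ₂)) K :=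
  rename (Fin.natAdd ℓ₁) q

/-- The product `θη ∈ End_K(S)` of the operators `θ = Σ_a c₁(a) ∂_x^a` on `S₁` and
`η = Σ_b c₂(b) ∂_y^b` on `S₂`, acting on `S = S₁ ⊗ S₂`. -/
noncomputable def mixOp (K : Type) [CommRing K] {ℓ₁ ℓ₂ : ℕ}
    (c₁ : (Fin ℓ₁ →₀ ℕ) →₀ MvPolynomial (Fin ℓ₁) K)
    (c₂ : (Fin ℓ₂ →₀ ℕ) →₀ MvPolynomial (Fin ℓ₂) K) :
    Module.End K (MvPolynomial (Fin (ℓ₁ + ℓ₂)) K) :=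
  c₁.sum fun a p => c₂.sum fun b q =>
    (liftPoly₁ K p * liftPoly₂ K q) • pdOp K (liftIdx₁ a + liftIdx₂ b)

/-- The `S`-submodule `S·T₁·T₂ ⊆ End_K(S)` generated by products `θη` of operators
of order `i` in the `x`-variables lying in `T₁` with operators of order `j` in the
`y`-variables lying in `T₂`. -/
noncomputable def SDDmod (K : Type) [CommRing K] {ℓ₁ ℓ₂ : ℕ} (i j : ℕ)
    (T₁ : Set (Module.End K (MvPolynomial (Fin ℓ₁) K)))
    (T₂ : Set (Module.End K (MvPolynomial (Fin ℓ₂) K))) :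
    Submodule (MvPolynomial (Fin (ℓ₁ + ℓ₂)) K)
      (Module.End K (MvPolynomial (Fin (ℓ₁ + ℓ₂)) K)) :=
  Submodule.span _
    {Θ | ∃ (c₁ : (Fin ℓ₁ →₀ ℕ) →₀ MvPolynomial (Fin ℓ₁) K)
           (c₂ : (Fin ℓ₂ →₀ ℕ) →₀ MvPolynomial (Fin ℓ₂) K),
      (∀ a ∈ c₁.support, mdeg a = i) ∧ (∀ b ∈ c₂.support, mdeg b = j) ∧
      sumOp K c₁ ∈ T₁ ∧ sumOp K c₂ ∈ T₂ ∧ Θ = mixOp K c₁ c₂}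

/-- Defining polynomial of the product arrangement `𝒜₁ × 𝒜₂`. -/
noncomputable def prodQ (K : Type) [Field K] {ℓ₁ ℓ₂ : ℕ}
    (A₁ : Arrangement K ℓ₁) (A₂ : Arrangement K ℓ₂) : MvPolynomial (Fin (ℓ₁ + ℓ₂)) K :=
  liftPoly₁ K A₁.defQ * liftPoly₂ K A₂.defQ

/-!
`S` is spanned over `K` by the products `f(x) g(y)`, and `∂_x^a ∂_y^b` acts on such a product
factorwise, as `(∂_x^a f)(∂_y^b g)`, because `∂_y` kills `f(x)` and `∂_x` kills `g(y)`. Hence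
`θη (Q₁Q₂ f g) = θ(Q₁ f) · η(Q₂ g) ∈ Q₁Q₂ S`, while `θη` has order `i + j` since `|a| + |b| = i + j`.
-/

section Intertwining

variable {R M N : Type*} [CommSemiring R] [AddCommMonoid M] [AddCommMonoid N]
  [Module R M] [Module R N]

theorem prod_ofFn_comp_eq_comp_prod_ofFn {n : ℕ} (D : Fin n → Module.End R M)
    (d : Fin n → Module.End R N) (φ : N →ₗ[R] M) (h : ∀ k, D k ∘ₗ φ = φ ∘ₗ d k) :
    (List.ofFn D).prod ∘ₗ φ = φ ∘ₗ (List.ofFn d).prod := by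
  induction n with
  | zero => rfl
  | succ n ih =>
    simp only [List.ofFn_succ, List.prod_cons, Module.End.mul_eq_comp, LinearMap.comp_assoc,
      ih (fun k => D k.succ) (fun k => d k.succ) (fun k => h k.succ)]
    rw [← LinearMap.comp_assoc, h 0, LinearMap.comp_assoc]

end Intertwining

section PartialDerivatives

variable (K : Type) [CommRing K] {σ : Type*}

noncomputable def pdOpAlong {m : ℕ} (e : Fin m → σ) (a : Fin m → ℕ) :
    Module.End K (MvPolynomial σ K) :=
  (List.ofFn fun k => (pderiv (e k) : Derivation K (MvPolynomial σ K) _).toLinearMap ^ a k).prod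

variable {K}

theorem pdOp_eq_pdOpAlong_mul_pdOpAlong {m n : ℕ} (u : Fin (m + n) →₀ ℕ) :
    pdOp K u = pdOpAlong K (Fin.castAdd n) (u ∘ Fin.castAdd n) *
      pdOpAlong K (Fin.natAdd m) (u ∘ Fin.natAdd m) := by
  rw [pdOp, List.ofFn_add, List.prod_append]
  rfl

theorem pdOpAlong_mul_left {m : ℕ} {e : Fin m → σ} {r : MvPolynomial σ K}
    (hr : ∀ k, pderiv (e k) r = 0) (a : Fin m → ℕ) (f : MvPolynomial σ K) :
    pdOpAlong K e a (r * f) = r * pdOpAlong K e a f := by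
  have hcomm : Commute (LinearMap.mulLeft K r) (pdOpAlong K e a) := by
    refine Commute.list_prod_right _ _ fun D hD => ?_
    obtain ⟨k, rfl⟩ := List.mem_ofFn.mp hD
    refine Commute.pow_right (LinearMap.ext fun g => ?_) _
    simp [hr k]
  exact (LinearMap.congr_fun hcomm.eq f).symm

theorem pdOpAlong_rename {τ : Type*} {m : ℕ} {e : Fin m → τ} (he : Function.Injective e)
    (a : Fin m → ℕ) (p : MvPolynomial (Fin m) K) :
    pdOpAlong K e a (rename e p) = rename e (pdOpAlong K id a p) :=
  LinearMap.congr_fun (prod_ofFn_comp_eq_comp_prod_ofFn _ _ (rename e).toLinearMap fun k =>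
    Module.End.commute_pow_left_of_commute
      (LinearMap.ext fun q => pderiv_rename he k q) (a k)) p

theorem pderiv_rename_of_notMem_range {τ : Type*} {e : σ → τ} {i : τ} (hi : i ∉ Set.range e)
    (p : MvPolynomial σ K) : pderiv i (rename e p) = 0 := by
  refine pderiv_eq_zero_of_notMem_vars fun h => hi ?_
  obtain ⟨j, -, rfl⟩ := mem_vars_rename e p h
  exact ⟨j, rfl⟩

end PartialDerivatives

section Product

variable {K : Type} [CommRing K] {ℓ₁ ℓ₂ : ℕ}

theorem Fin.natAdd_notMem_range_castAdd (k : Fin ℓ₂) :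
    Fin.natAdd ℓ₁ k ∉ Set.range (Fin.castAdd ℓ₂) := by
  rintro ⟨j, hj⟩
  rw [Fin.ext_iff, Fin.val_castAdd, Fin.val_natAdd] at hj
  omega

theorem Fin.castAdd_notMem_range_natAdd (k : Fin ℓ₁) :
    Fin.castAdd ℓ₂ k ∉ Set.range (Fin.natAdd ℓ₁) := by
  rintro ⟨j, hj⟩
  rw [Fin.ext_iff, Fin.val_castAdd, Fin.val_natAdd] at hj
  omega

theorem liftIdx₁_add_liftIdx₂_comp_castAdd (a : Fin ℓ₁ →₀ ℕ) (b : Fin ℓ₂ →₀ ℕ) :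
    ⇑(liftIdx₁ a + liftIdx₂ b : Fin (ℓ₁ + ℓ₂) →₀ ℕ) ∘ Fin.castAdd ℓ₂ = a := by
  ext k
  have h₁ : liftIdx₁ (ℓ₂ := ℓ₂) a (Fin.castAdd ℓ₂ k) = a k := Finsupp.embDomain_apply_self _ a k
  have h₂ : liftIdx₂ (ℓ₁ := ℓ₁) b (Fin.castAdd ℓ₂ k) = 0 :=
    Finsupp.embDomain_of_notMem_range _ _ _ (Fin.castAdd_notMem_range_natAdd k)
  simp [h₁, h₂]

theorem liftIdx₁_add_liftIdx₂_comp_natAdd (a : Fin ℓ₁ →₀ ℕ) (b : Fin ℓ₂ →₀ ℕ) :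
    ⇑(liftIdx₁ a + liftIdx₂ b : Fin (ℓ₁ + ℓ₂) →₀ ℕ) ∘ Fin.natAdd ℓ₁ = b := by
  ext k
  have h₁ : liftIdx₁ (ℓ₂ := ℓ₂) a (Fin.natAdd ℓ₁ k) = 0 :=
    Finsupp.embDomain_of_notMem_range _ _ _ (Fin.natAdd_notMem_range_castAdd k)
  have h₂ : liftIdx₂ (ℓ₁ := ℓ₁) b (Fin.natAdd ℓ₁ k) = b k := Finsupp.embDomain_apply_self _ b k
  simp [h₁, h₂]

theorem mdeg_add {ℓ : ℕ} (u v : Fin ℓ →₀ ℕ) : mdeg (u + v) = mdeg u + mdeg v :=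
  Finsupp.sum_add_index' (fun _ => rfl) (fun _ _ _ => rfl)

theorem mdeg_liftIdx₁ (a : Fin ℓ₁ →₀ ℕ) : mdeg (liftIdx₁ (ℓ₂ := ℓ₂) a) = mdeg a :=
  Finsupp.sum_embDomain

theorem mdeg_liftIdx₂ (b : Fin ℓ₂ →₀ ℕ) : mdeg (liftIdx₂ (ℓ₁ := ℓ₁) b) = mdeg b :=
  Finsupp.sum_embDomain

theorem pdOp_liftIdx₁_add_liftIdx₂_apply (a : Fin ℓ₁ →₀ ℕ) (b : Fin ℓ₂ →₀ ℕ)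
    (f : MvPolynomial (Fin ℓ₁) K) (g : MvPolynomial (Fin ℓ₂) K) :
    pdOp K (liftIdx₁ a + liftIdx₂ b) (liftPoly₁ K f * liftPoly₂ K g) =
      liftPoly₁ K (pdOp K a f) * liftPoly₂ K (pdOp K b g) := by
  have hf : ∀ k, pderiv (Fin.natAdd ℓ₁ k) (liftPoly₁ K (ℓ₂ := ℓ₂) f) = 0 := fun k =>
    pderiv_rename_of_notMem_range (Fin.natAdd_notMem_range_castAdd k) f
  have hg : ∀ k, pderiv (Fin.castAdd ℓ₂ k) (liftPoly₂ K (ℓ₁ := ℓ₁) (pdOp K b g)) = 0 := fun k =>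
    pderiv_rename_of_notMem_range (Fin.castAdd_notMem_range_natAdd k) _
  calc pdOp K (liftIdx₁ a + liftIdx₂ b) (liftPoly₁ K f * liftPoly₂ K g)
      = pdOpAlong K (Fin.castAdd ℓ₂) a
          (pdOpAlong K (Fin.natAdd ℓ₁) b (liftPoly₁ K f * liftPoly₂ K g)) := by
        rw [pdOp_eq_pdOpAlong_mul_pdOpAlong, liftIdx₁_add_liftIdx₂_comp_castAdd,
          liftIdx₁_add_liftIdx₂_comp_natAdd]
        rfl
    _ = pdOpAlong K (Fin.castAdd ℓ₂) a (liftPoly₂ K (pdOp K b g) * liftPoly₁ K f) := by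
        rw [pdOpAlong_mul_left hf, liftPoly₂, pdOpAlong_rename (Fin.natAdd_injective ℓ₂ ℓ₁),
          mul_comm]
        rfl
    _ = liftPoly₁ K (pdOp K a f) * liftPoly₂ K (pdOp K b g) := by
        rw [pdOpAlong_mul_left hg, liftPoly₁, pdOpAlong_rename (Fin.castAdd_injective ℓ₁ ℓ₂),
          mul_comm]
        rfl

theorem mixOp_liftPoly₁_mul_liftPoly₂ (c₁ : (Fin ℓ₁ →₀ ℕ) →₀ MvPolynomial (Fin ℓ₁) K)
    (c₂ : (Fin ℓ₂ →₀ ℕ) →₀ MvPolynomial (Fin ℓ₂) K)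
    (f : MvPolynomial (Fin ℓ₁) K) (g : MvPolynomial (Fin ℓ₂) K) :
    mixOp K c₁ c₂ (liftPoly₁ K f * liftPoly₂ K g) =
      liftPoly₁ K (sumOp K c₁ f) * liftPoly₂ K (sumOp K c₂ g) := by
  simp only [mixOp, sumOp, Finsupp.sum, LinearMap.coe_sum, Finset.sum_apply,
    LinearMap.smul_apply, smul_eq_mul, pdOp_liftIdx₁_add_liftIdx₂_apply]
  simp only [liftPoly₁, liftPoly₂, map_sum, map_mul, Finset.sum_mul_sum]
  refine Finset.sum_congr rfl fun a _ => Finset.sum_congr rfl fun b _ => ?_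
  ring

theorem span_liftPoly₁_mul_liftPoly₂_eq_top :
    Submodule.span K {h : MvPolynomial (Fin (ℓ₁ + ℓ₂)) K |
      ∃ f g, liftPoly₁ K f * liftPoly₂ K g = h} = ⊤ := by
  let P : Submonoid (MvPolynomial (Fin (ℓ₁ + ℓ₂)) K) :=
    { carrier := {h | ∃ f g, liftPoly₁ K f * liftPoly₂ K g = h}
      one_mem' := ⟨1, 1, by simp [liftPoly₁, liftPoly₂]⟩
      mul_mem' := by
        rintro _ _ ⟨f, g, rfl⟩ ⟨f', g', rfl⟩
        exact ⟨f * f', g * g', by simp only [liftPoly₁, liftPoly₂, map_mul]; ring⟩ }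
  have hX : Set.range X ⊆ (P : Set (MvPolynomial (Fin (ℓ₁ + ℓ₂)) K)) := by
    rintro _ ⟨k, rfl⟩
    induction k using Fin.addCases with
    | left k => exact ⟨X k, 1, by simp [liftPoly₁, liftPoly₂]⟩
    | right k => exact ⟨1, X k, by simp [liftPoly₁, liftPoly₂]⟩
  rw [eq_top_iff, ← Algebra.top_toSubmodule, ← adjoin_range_X, Algebra.adjoin_eq_span]
  exact Submodule.span_mono (Submonoid.closure_le.mpr hX)

theorem mixOp_mem_stabMod {c₁ : (Fin ℓ₁ →₀ ℕ) →₀ MvPolynomial (Fin ℓ₁) K}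
    {c₂ : (Fin ℓ₂ →₀ ℕ) →₀ MvPolynomial (Fin ℓ₂) K} {Q₁ : MvPolynomial (Fin ℓ₁) K}
    {Q₂ : MvPolynomial (Fin ℓ₂) K} (h₁ : sumOp K c₁ ∈ stabMod K Q₁)
    (h₂ : sumOp K c₂ ∈ stabMod K Q₂) :
    mixOp K c₁ c₂ ∈ stabMod K (liftPoly₁ K Q₁ * liftPoly₂ K Q₂) := by
  set Q := liftPoly₁ K Q₁ * liftPoly₂ K Q₂
  suffices ⊤ ≤ ((Ideal.span {Q}).restrictScalars K).comap
      (mixOp K c₁ c₂ ∘ₗ LinearMap.mulLeft K Q) from fun h => this Submodule.mem_top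
  rw [← span_liftPoly₁_mul_liftPoly₂_eq_top, Submodule.span_le]
  rintro _ ⟨f, g, rfl⟩
  have hQ : Q * (liftPoly₁ K f * liftPoly₂ K g) =
      liftPoly₁ K (Q₁ * f) * liftPoly₂ K (Q₂ * g) := by
    simp only [Q, liftPoly₁, liftPoly₂, map_mul]
    ring
  change mixOp K c₁ c₂ (Q * _) ∈ Ideal.span {Q}
  rw [hQ, mixOp_liftPoly₁_mul_liftPoly₂, Ideal.mem_span_singleton]
  exact mul_dvd_mul (map_dvd _ (Ideal.mem_span_singleton.mp (h₁ f)))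
    (map_dvd _ (Ideal.mem_span_singleton.mp (h₂ g)))

theorem mixOp_mem_Dfull {c₁ : (Fin ℓ₁ →₀ ℕ) →₀ MvPolynomial (Fin ℓ₁) K}
    {c₂ : (Fin ℓ₂ →₀ ℕ) →₀ MvPolynomial (Fin ℓ₂) K} {i j : ℕ}
    (hc₁ : ∀ a ∈ c₁.support, mdeg a = i) (hc₂ : ∀ b ∈ c₂.support, mdeg b = j) :
    mixOp K c₁ c₂ ∈ Dfull K (i + j) :=
  Submodule.sum_mem _ fun a ha => Submodule.sum_mem _ fun b hb =>
    Submodule.smul_mem _ _ <| Submodule.subset_span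
      ⟨_, by rw [mdeg_add, mdeg_liftIdx₁, mdeg_liftIdx₂, hc₁ a ha, hc₂ b hb], rfl⟩

theorem mixOp_mem_Dmod {c₁ : (Fin ℓ₁ →₀ ℕ) →₀ MvPolynomial (Fin ℓ₁) K}
    {c₂ : (Fin ℓ₂ →₀ ℕ) →₀ MvPolynomial (Fin ℓ₂) K} {i j : ℕ} {Q₁ : MvPolynomial (Fin ℓ₁) K}
    {Q₂ : MvPolynomial (Fin ℓ₂) K} (hc₁ : ∀ a ∈ c₁.support, mdeg a = i)
    (hc₂ : ∀ b ∈ c₂.support, mdeg b = j) (h₁ : sumOp K c₁ ∈ Dmod K i Q₁)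
    (h₂ : sumOp K c₂ ∈ Dmod K j Q₂) :
    mixOp K c₁ c₂ ∈ Dmod K (i + j) (liftPoly₁ K Q₁ * liftPoly₂ K Q₂) :=
  ⟨mixOp_mem_Dfull hc₁ hc₂, mixOp_mem_stabMod h₁.2 h₂.2⟩

end Product

theorem prod_op_mem_general (K : Type) [Field K] {ℓ₁ ℓ₂ : ℕ}
    (A₁ : Arrangement K ℓ₁) (A₂ : Arrangement K ℓ₂) (i j : ℕ) :
    (∀ (c₁ : (Fin ℓ₁ →₀ ℕ) →₀ MvPolynomial (Fin ℓ₁) K)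
       (c₂ : (Fin ℓ₂ →₀ ℕ) →₀ MvPolynomial (Fin ℓ₂) K),
      (∀ a ∈ c₁.support, mdeg a = i) → (∀ b ∈ c₂.support, mdeg b = j) →
      sumOp K c₁ ∈ Dmod K i A₁.defQ → sumOp K c₂ ∈ Dmod K j A₂.defQ →
      mixOp K c₁ c₂ ∈ Dmod K (i + j) (prodQ K A₁ A₂)) ∧
    SDDmod K i j (Dmod K i A₁.defQ : Set _) (Dmod K j A₂.defQ : Set _) ≤
      Dmod K (i + j) (prodQ K A₁ A₂) := by
  refine ⟨fun _ _ hc₁ hc₂ h₁ h₂ => mixOp_mem_Dmod hc₁ hc₂ h₁ h₂, Submodule.span_le.mpr ?_⟩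
  rintro _ ⟨_, _, hc₁, hc₂, h₁, h₂, rfl⟩
  exact mixOp_mem_Dmod hc₁ hc₂ h₁ h₂

/-- If `θ ∈ D^{(i)}(𝒜₁)` and `η ∈ D^{(j)}(𝒜₂)` then `θη ∈ D^{(i+j)}(𝒜₁ × 𝒜₂)`;
consequently `S·D^{(i)}(𝒜₁)·D^{(j)}(𝒜₂) ⊆ D^{(i+j)}(𝒜₁ × 𝒜₂)`. -/
theorem prod_op_mem (K : Type) [Field K] [CharZero K] {ℓ₁ ℓ₂ : ℕ}
    (hℓ₁ : 0 < ℓ₁) (hℓ₂ : 0 < ℓ₂)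
    (A₁ : Arrangement K ℓ₁) (A₂ : Arrangement K ℓ₂) (i j : ℕ) :
    (∀ (c₁ : (Fin ℓ₁ →₀ ℕ) →₀ MvPolynomial (Fin ℓ₁) K)
       (c₂ : (Fin ℓ₂ →₀ ℕ) →₀ MvPolynomial (Fin ℓ₂) K),
      (∀ a ∈ c₁.support, mdeg a = i) → (∀ b ∈ c₂.support, mdeg b = j) →
      sumOp K c₁ ∈ Dmod K i A₁.defQ → sumOp K c₂ ∈ Dmod K j A₂.defQ →
      mixOp K c₁ c₂ ∈ Dmod K (i + j) (prodQ K A₁ A₂)) ∧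
    SDDmod K i j (Dmod K i A₁.defQ : Set _) (Dmod K j A₂.defQ : Set _) ≤
      Dmod K (i + j) (prodQ K A₁ A₂) :=
  prod_op_mem_general K A₁ A₂ i j
end
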